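/- The map ℂ → ℂˣ ⊗_ℤ ℚ sending a complex number s to exp(s) ⊗ 1 is a homomorphism from the additive group of ℂ to the ℚ-vector space ℂˣ ⊗_ℤ ℚ; it is surjective, and its kernel is exactly 2πi·ℚ = {2πi·q : q ∈ ℚ}. Consequently it induces an isomorphism of abelian groups ℂ/(2πi)ℚ ≅ ℂˣ ⊗_ℤ ℚ. -/

import Mathlib

/-
`exp : ℂ → ℂˣ` is a surjective homomorphism with kernel `2πiℤ`. Tensoring over `ℤ` with `ℚ` is
localization at the nonzero integers, so `u ⊗ 1` vanishes exactly when `u` is torsion, and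
`u ↦ u ⊗ 1` is onto because `ℂˣ` is divisible. Hence `exp s ⊗ 1 = 0` iff `n s ∈ 2πiℤ` for some
`n ≠ 0`, i.e. `s ∈ 2πiℚ`.
-/

open scoped TensorProduct

/-- The subgroup `2πi·ℚ ⊆ ℂ`, i.e. the range of `q ↦ 2πi·q`. -/
noncomputable def twoPiIQ : AddSubgroup ℂ :=
  (AddMonoidHom.mk' (fun q : ℚ => (2 * Real.pi * Complex.I) * (q : ℂ))
    (by intro a b; push_cast; ring)).range

/-- The map `ℂ → ℂˣ ⊗_ℤ ℚ`, `s ↦ exp s ⊗ 1` (with `ℂˣ` written additively). -/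
noncomputable def expTensor (s : ℂ) : (Additive ℂˣ) ⊗[ℤ] ℚ :=
  (Additive.ofMul (Units.mk0 (Complex.exp s) (Complex.exp_ne_zero s))) ⊗ₜ[ℤ] (1 : ℚ)

section Localization

variable {R : Type*} [CommSemiring R] (S : Submonoid R) (A : Type*) [CommSemiring A] [Algebra R A]
  [IsLocalization S A] {M : Type*} [AddCommMonoid M] [Module R M]

instance isLocalizedModule_flip_mk_one : IsLocalizedModule S ((TensorProduct.mk R M A).flip 1) := by
  have : (TensorProduct.mk R M A).flip 1 =
      (TensorProduct.comm R A M).toLinearMap ∘ₗ TensorProduct.mk R A M 1 := by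
    ext; rfl
  rw [this]
  infer_instance

theorem tmul_one_eq_zero_iff (m : M) : m ⊗ₜ[R] (1 : A) = 0 ↔ ∃ s : S, s • m = 0 :=
  IsLocalizedModule.eq_zero_iff S ((TensorProduct.mk R M A).flip 1)

theorem tmul_one_surjective_of_divisible (h : ∀ (s : S) (m : M), ∃ m', s • m' = m) :
    Function.Surjective fun m : M => m ⊗ₜ[R] (1 : A) := by
  let f := (TensorProduct.mk R M A).flip 1
  intro x
  obtain ⟨⟨m, s⟩, rfl⟩ := IsLocalizedModule.mk'_surjective S f x
  obtain ⟨m', rfl⟩ := h s m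
  refine ⟨m', (IsLocalizedModule.mk'_eq_iff.mpr ?_).symm⟩
  exact f.map_smul_of_tower s m'

end Localization

noncomputable def expUnitsAddHom : ℂ →+ Additive ℂˣ :=
  AddMonoidHom.mk' (fun s => Additive.ofMul (Units.mk0 (Complex.exp s) (Complex.exp_ne_zero s)))
    fun s t => by ext; exact Complex.exp_add s t

theorem expUnitsAddHom_surjective : Function.Surjective expUnitsAddHom := fun u =>
  ⟨Complex.log ((Additive.toMul u : ℂˣ) : ℂ), Units.ext (Complex.exp_log (Additive.toMul u).ne_zero)⟩

theorem complexUnits_divisible (n : nonZeroDivisors ℤ) (u : Additive ℂˣ) : ∃ v, n • v = u := by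
  obtain ⟨s, rfl⟩ := expUnitsAddHom_surjective u
  have hn : ((n : ℤ) : ℂ) ≠ 0 := by exact_mod_cast nonZeroDivisors.ne_zero n.2
  refine ⟨expUnitsAddHom (((n : ℤ) : ℂ)⁻¹ * s), ?_⟩
  rw [Submonoid.smul_def, ← map_zsmul, zsmul_eq_mul, mul_inv_cancel_left₀ hn]

theorem expUnitsAddHom_eq_zero_iff (s : ℂ) :
    expUnitsAddHom s = 0 ↔ ∃ k : ℤ, s = k * (2 * Real.pi * Complex.I) :=
  Units.ext_iff.trans Complex.exp_eq_one_iff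

theorem exists_smul_expUnitsAddHom_eq_zero_iff (s : ℂ) :
    (∃ n : nonZeroDivisors ℤ, n • expUnitsAddHom s = 0) ↔
      ∃ q : ℚ, s = (2 * Real.pi * Complex.I) * (q : ℂ) := by
  simp only [Submonoid.smul_def, ← map_zsmul, expUnitsAddHom_eq_zero_iff, zsmul_eq_mul,
    Subtype.exists, mem_nonZeroDivisors_iff_ne_zero, exists_prop]
  constructor
  · rintro ⟨n, hn, k, hk⟩
    refine ⟨k / n, ?_⟩
    push_cast
    field_simp
    linear_combination hk
  · rintro ⟨q, rfl⟩
    refine ⟨q.den, by exact_mod_cast q.den_nz, q.num, ?_⟩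
    have : (q.den : ℂ) * q = q.num := by exact_mod_cast Rat.den_mul_eq_num q
    linear_combination (2 * Real.pi * Complex.I) * this

/-- The map `s ↦ exp s ⊗ 1` is an additive group homomorphism `ℂ → ℂˣ ⊗_ℤ ℚ`;
it is surjective, its kernel is exactly `2πi·ℚ`, and consequently it induces an
isomorphism of abelian groups `ℂ/(2πi)ℚ ≅ ℂˣ ⊗_ℤ ℚ`. -/
theorem expTensor_hom_surjective_ker :
    (∀ s t : ℂ, expTensor (s + t) = expTensor s + expTensor t) ∧
    Function.Surjective expTensor ∧
    (∀ s : ℂ, expTensor s = 0 ↔ ∃ q : ℚ, s = (2 * Real.pi * Complex.I) * (q : ℂ)) ∧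
    Nonempty ((ℂ ⧸ twoPiIQ) ≃+ (Additive ℂˣ) ⊗[ℤ] ℚ) := by
  let φ : ℂ →+ (Additive ℂˣ) ⊗[ℤ] ℚ :=
    ((TensorProduct.mk ℤ (Additive ℂˣ) ℚ).flip 1).toAddMonoidHom.comp expUnitsAddHom
  have hsurj : Function.Surjective φ :=
    (tmul_one_surjective_of_divisible (nonZeroDivisors ℤ) ℚ complexUnits_divisible).comp
      expUnitsAddHom_surjective
  have hker (s : ℂ) : φ s = 0 ↔ ∃ q : ℚ, s = (2 * Real.pi * Complex.I) * (q : ℂ) :=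
    (tmul_one_eq_zero_iff (nonZeroDivisors ℤ) ℚ _).trans (exists_smul_expUnitsAddHom_eq_zero_iff s)
  have hkerφ : twoPiIQ = φ.ker := by
    ext s
    rw [AddMonoidHom.mem_ker, hker]
    exact exists_congr fun q => eq_comm
  refine ⟨map_add φ, hsurj, hker, ⟨?_⟩⟩
  exact (QuotientAddGroup.quotientAddEquivOfEq hkerφ).trans
    (QuotientAddGroup.quotientKerEquivOfSurjective φ hsurj)
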